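/- For all integers r ≥ 0 and n ≥ 1, the following identity of quantum binomial coefficients holds in ℚ(v): Σ_{k=0}^{r} v^{−kr} · (−1)^{k−r} · binom(n−k+r, n) · binom(r+n+1, k) = v^{−r(n+r+1)}. -/

import Mathlib

/-- The quantum integer `[n] = (v^n - v^{-n})/(v - v^{-1})` in `ℚ(v)`. -/
noncomputable def qint (n : ℤ) : RatFunc ℚ :=
  (RatFunc.X ^ n - RatFunc.X ^ (-n)) / (RatFunc.X - RatFunc.X⁻¹)

/-- The quantum factorial `[n]! = [n][n-1]⋯[1]`, with `[0]! = 1`. -/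
noncomputable def qfact (n : ℕ) : RatFunc ℚ :=
  ∏ i ∈ Finset.range n, qint (i + 1)

/-- The quantum binomial coefficient `binom(n, k) = [n][n-1]⋯[n-k+1]/[k]!`
for `n : ℤ` and `k : ℕ`. -/
noncomputable def qbinom (n : ℤ) (k : ℕ) : RatFunc ℚ :=
  (∏ i ∈ Finset.range k, qint (n - i)) / qfact k

/-!
By symmetry and upper negation, `binom(n+j, n) = (-1)^j binom(-n-1, j)`; the signs then cancel
and, after pulling out `v^{-r(n+r+1)}`, the sum is the q-Vandermonde convolution
`S(m, p) = Σ_k v^{m(r-k) - pk} binom(m, k) binom(p, r-k) = binom(m+p, r)` at `m = r+n+1`,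
`p = -n-1`, whose value is `binom(r, r) = 1`. The convolution holds for `m ∈ ℕ` by induction:
the two q-Pascal rules expand `S(m+1, p)` and `S(m, p+1)` into the same sum, so `S(m, p)` only
depends on `m + p`, and `S(0, p) = binom(p, r)` because `binom(0, k) = 0` for `k > 0`.
-/

open Finset

local notation "v" => (RatFunc.X : RatFunc ℚ)

lemma X_pow_ne_one {m : ℕ} (hm : 0 < m) : v ^ m ≠ 1 := by
  intro h
  have : (Polynomial.X ^ m : Polynomial ℚ) = 1 := RatFunc.algebraMap_injective ℚ <| by
    rwa [map_pow, RatFunc.algebraMap_X, map_one]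
  simpa [hm.ne'] using congrArg Polynomial.natDegree this

lemma qint_zero : qint 0 = 0 := by simp [qint]

lemma qint_neg (n : ℤ) : qint (-n) = -qint n := by
  rw [qint, qint, neg_neg, ← neg_div, neg_sub]

lemma qint_add (a b : ℤ) : qint (a + b) = v ^ b * qint a + v ^ (-a) * qint b := by
  simp only [qint, mul_div_assoc', ← add_div, neg_add, zpow_add₀ (RatFunc.X_ne_zero (K := ℚ))]
  ring

lemma qint_natCast_ne_zero {n : ℕ} (hn : 0 < n) : qint n ≠ 0 := by
  have numerator_ne_zero {m : ℕ} (hm : 0 < m) : v ^ (m : ℤ) - v ^ (-(m : ℤ)) ≠ 0 := by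
    intro h
    rw [sub_eq_zero, zpow_neg, ← mul_eq_one_iff_eq_inv₀ (zpow_ne_zero _ RatFunc.X_ne_zero),
      zpow_natCast, ← pow_add] at h
    exact X_pow_ne_one (by omega) h
  exact div_ne_zero (numerator_ne_zero hn) (by simpa using numerator_ne_zero one_pos)

lemma qint_natCast_succ_ne_zero (k : ℕ) : qint (k + 1) ≠ 0 :=
  mod_cast qint_natCast_ne_zero k.succ_pos

lemma qfact_succ (n : ℕ) : qfact (n + 1) = qfact n * qint (n + 1) :=
  prod_range_succ _ n

lemma qfact_ne_zero (n : ℕ) : qfact n ≠ 0 :=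
  prod_ne_zero_iff.mpr fun i _ => qint_natCast_succ_ne_zero i

lemma qbinom_zero (t : ℤ) : qbinom t 0 = 1 := by
  simp [qbinom, qfact]

lemma qbinom_zero_succ (k : ℕ) : qbinom 0 (k + 1) = 0 := by
  rw [qbinom, prod_eq_zero (mem_range.mpr k.succ_pos) (by simp [qint_zero]), zero_div]

lemma qbinom_succ (t : ℤ) (k : ℕ) :
    qbinom t (k + 1) = qbinom t k * qint (t - k) / qint (k + 1) := by
  have := qint_natCast_succ_ne_zero k
  rw [qbinom, qbinom, prod_range_succ, qfact_succ]
  field_simp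

lemma qbinom_succ' (t : ℤ) (k : ℕ) :
    qbinom t (k + 1) = qbinom (t - 1) k * qint t / qint (k + 1) := by
  have := qint_natCast_succ_ne_zero k
  rw [qbinom, qbinom, prod_range_succ', qfact_succ]
  simp only [Nat.cast_add, Nat.cast_one, Nat.cast_zero, sub_zero, sub_add_eq_sub_sub_swap]
  field_simp

lemma qbinom_pascal (t : ℤ) (k : ℕ) :
    qbinom t (k + 1) =
      v ^ ((k : ℤ) + 1) * qbinom (t - 1) (k + 1) +
        v ^ ((k : ℤ) + 1 - t) * qbinom (t - 1) k := by
  have hk := qint_natCast_succ_ne_zero k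
  have ht := qint_add (t - 1 - k) (k + 1)
  rw [show t - 1 - k + (k + 1) = t by ring, show -(t - 1 - k) = k + 1 - t by ring] at ht
  rw [qbinom_succ', qbinom_succ (t - 1), ht]
  field_simp

lemma qbinom_pascal' (t : ℤ) (k : ℕ) :
    qbinom t (k + 1) =
      v ^ (-(k : ℤ) - 1) * qbinom (t - 1) (k + 1) + v ^ (t - k - 1) * qbinom (t - 1) k := by
  have hk := qint_natCast_succ_ne_zero k
  have ht := qint_add (k + 1) (t - 1 - k)
  rw [show (k : ℤ) + 1 + (t - 1 - k) = t by ring, show -((k : ℤ) + 1) = -k - 1 by ring,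
    show t - 1 - k = t - k - 1 by ring] at ht
  rw [qbinom_succ', qbinom_succ (t - 1), ht, sub_sub t 1 (k : ℤ), ← sub_sub, sub_right_comm t]
  field_simp
  ring

noncomputable def qVandermondeSum (m p : ℤ) (r : ℕ) : RatFunc ℚ :=
  ∑ k ∈ range (r + 1), v ^ (m * ((r : ℤ) - k) - p * k) * qbinom m k * qbinom p (r - k)

noncomputable def pascalMainTerm (m p : ℤ) (r k : ℕ) : RatFunc ℚ :=
  v ^ ((m + 1) * ((r : ℤ) - k) - p * k - k) * qbinom m k * qbinom p (r - k)

noncomputable def pascalCarryTerm (m p : ℤ) (r k : ℕ) : RatFunc ℚ :=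
  v ^ ((m + 1) * ((r : ℤ) - k - 1) - p * (k + 1) + m - k) * qbinom m k * qbinom p (r - (k + 1))

lemma X_zpow_mul_mul_X_zpow_mul (a b : ℤ) (x y : RatFunc ℚ) :
    v ^ a * x * (v ^ b * y) = v ^ (a + b) * x * y := by
  rw [zpow_add₀ RatFunc.X_ne_zero]
  ring

lemma qVandermondeSum_succ_left (m p : ℤ) (r : ℕ) :
    qVandermondeSum (m + 1) p r =
      ∑ k ∈ range (r + 1), pascalMainTerm m p r k +
        ∑ k ∈ range r, pascalCarryTerm m p r k := by
  have hzero : v ^ ((m + 1) * ((r : ℤ) - (0 : ℕ)) - p * (0 : ℕ)) * qbinom (m + 1) 0 *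
      qbinom p (r - 0) = pascalMainTerm m p r 0 := by
    simp [pascalMainTerm, qbinom_zero]
  have hsucc (k : ℕ) : v ^ ((m + 1) * ((r : ℤ) - (k + 1 : ℕ)) - p * (k + 1 : ℕ)) *
      qbinom (m + 1) (k + 1) * qbinom p (r - (k + 1)) =
      pascalMainTerm m p r (k + 1) + pascalCarryTerm m p r k := by
    rw [qbinom_pascal', add_sub_cancel_right, mul_add, add_mul, ← mul_assoc, ← mul_assoc,
      ← zpow_add₀ RatFunc.X_ne_zero, ← zpow_add₀ RatFunc.X_ne_zero, pascalMainTerm,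
      pascalCarryTerm]
    congr 4 <;> push_cast <;> ring
  rw [qVandermondeSum, sum_range_succ', sum_range_succ' (pascalMainTerm m p r),
    sum_congr rfl fun k _ => hsucc k, sum_add_distrib, hzero]
  ring

lemma qVandermondeSum_succ_right (m p : ℤ) (r : ℕ) :
    qVandermondeSum m (p + 1) r =
      ∑ k ∈ range (r + 1), pascalMainTerm m p r k +
        ∑ k ∈ range r, pascalCarryTerm m p r k := by
  have hlast : v ^ (m * ((r : ℤ) - r) - (p + 1) * r) * qbinom m r * qbinom (p + 1) (r - r) =
      pascalMainTerm m p r r := by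
    simp only [pascalMainTerm, Nat.sub_self, qbinom_zero]
    ring_nf
  have hlt {k : ℕ} (hk : k ∈ range r) : v ^ (m * ((r : ℤ) - k) - (p + 1) * k) *
      qbinom m k * qbinom (p + 1) (r - k) = pascalMainTerm m p r k + pascalCarryTerm m p r k := by
    have hkr := mem_range.mp hk
    obtain ⟨j, hj⟩ : ∃ j, r - k = j + 1 := ⟨r - (k + 1), by omega⟩
    have hcast : (j : ℤ) = r - k - 1 := by omega
    rw [hj, qbinom_pascal, add_sub_cancel_right, mul_add, X_zpow_mul_mul_X_zpow_mul,
      X_zpow_mul_mul_X_zpow_mul, pascalMainTerm, pascalCarryTerm, hj,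
      show r - (k + 1) = j by omega]
    congr 4 <;> rw [hcast] <;> ring
  rw [qVandermondeSum, sum_range_succ, sum_range_succ (pascalMainTerm m p r),
    sum_congr rfl fun k hk => hlt hk, sum_add_distrib, hlast]
  ring

lemma qVandermondeSum_zero_left (p : ℤ) (r : ℕ) : qVandermondeSum 0 p r = qbinom p r := by
  rw [qVandermondeSum, sum_eq_single_of_mem 0 (mem_range.mpr r.succ_pos)]
  · simp [qbinom_zero]
  · rintro (_ | k) _ hk
    · exact absurd rfl hk
    · simp [qbinom_zero_succ]

theorem qbinom_natCast_add (m : ℕ) (p : ℤ) (r : ℕ) :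
    qbinom (m + p) r = qVandermondeSum m p r := by
  induction m generalizing p with
  | zero => simpa using (qVandermondeSum_zero_left p r).symm
  | succ m ih =>
    rw [Nat.cast_succ, qVandermondeSum_succ_left, ← qVandermondeSum_succ_right, ← ih,
      add_right_comm, add_assoc]

lemma prod_qint_sub_mul_qfact {M j : ℕ} (h : j ≤ M) :
    (∏ i ∈ range j, qint ((M : ℤ) - i)) * qfact (M - j) = qfact M := by
  induction j with
  | zero => simp
  | succ j ih =>
    obtain ⟨l, hl⟩ : ∃ l, M - j = l + 1 := ⟨M - (j + 1), by omega⟩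
    rw [← ih (by omega), prod_range_succ, mul_assoc, hl, qfact_succ,
      show M - (j + 1) = l by omega, show (M : ℤ) - j = l + 1 by omega, mul_comm (qfact l)]

lemma qbinom_natCast_eq {M j : ℕ} (h : j ≤ M) :
    qbinom M j = qfact M / (qfact j * qfact (M - j)) := by
  rw [qbinom, ← prod_qint_sub_mul_qfact h]
  field_simp [qfact_ne_zero]

lemma qbinom_natCast_sub {M j : ℕ} (h : j ≤ M) : qbinom M (M - j) = qbinom M j := by
  rw [qbinom_natCast_eq h, qbinom_natCast_eq (Nat.sub_le M j), Nat.sub_sub_self h, mul_comm]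

lemma qbinom_natCast_self (M : ℕ) : qbinom M M = 1 := by
  rw [qbinom_natCast_eq le_rfl, Nat.sub_self, show qfact 0 = 1 from prod_range_zero _, mul_one,
    div_self (qfact_ne_zero M)]

lemma qbinom_neg (a : ℤ) (k : ℕ) : qbinom (-a) k = (-1) ^ k * qbinom (a - 1 + k) k := by
  have hrefl : ∏ i ∈ range k, qint (a - 1 + k - i) = ∏ i ∈ range k, qint (a + i) := by
    rw [← prod_range_reflect (fun i : ℕ => qint (a + i))]
    refine prod_congr rfl fun i hi => ?_
    have := mem_range.mp hi
    congr 1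
    omega
  have hneg : ∏ i ∈ range k, qint (-a - i) = (-1) ^ k * ∏ i ∈ range k, qint (a + i) := by
    simp only [sub_eq_add_neg, ← neg_add, qint_neg, prod_neg, card_range]
  rw [qbinom, qbinom, ← mul_div_assoc, hrefl, hneg]

lemma qbinom_natCast_add_left (n j : ℕ) :
    qbinom ((n + j : ℕ) : ℤ) n = (-1) ^ j * qbinom (-n - 1) j := by
  have hsymm := qbinom_natCast_sub (n.le_add_right j)
  rw [Nat.add_sub_cancel_left] at hsymm
  rw [← hsymm, show (-n - 1 : ℤ) = -(n + 1) by ring, qbinom_neg, ← mul_assoc, ← mul_pow]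
  push_cast
  ring_nf

lemma summand_eq_qVandermonde_term (n : ℕ) {r k : ℕ} (hkr : k ≤ r) :
    v ^ (-(k : ℤ) * r) * (-1 : RatFunc ℚ) ^ ((k : ℤ) - r) *
        qbinom ((n : ℤ) - k + r) n * qbinom ((r : ℤ) + n + 1) k =
      v ^ (-(r : ℤ) * (n + r + 1)) * (v ^ (((r : ℤ) + n + 1) * (r - k) - (-n - 1) * k) *
        qbinom ((r : ℤ) + n + 1) k * qbinom (-n - 1) (r - k)) := by
  have hsign : (-1 : RatFunc ℚ) ^ ((k : ℤ) - r) * (-1) ^ (r - k) = 1 := by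
    rw [← zpow_natCast, ← zpow_add₀ (neg_ne_zero.mpr one_ne_zero), Nat.cast_sub hkr,
      sub_add_sub_cancel', sub_self, zpow_zero]
  have hpow : v ^ (-(k : ℤ) * r) =
      v ^ (-(r : ℤ) * (n + r + 1)) * v ^ (((r : ℤ) + n + 1) * (r - k) - (-n - 1) * k) := by
    rw [← zpow_add₀ RatFunc.X_ne_zero]
    ring_nf
  rw [show (n : ℤ) - k + r = ((n + (r - k) : ℕ) : ℤ) by omega, qbinom_natCast_add_left, hpow]
  linear_combination (v ^ (-(r : ℤ) * (n + r + 1)) *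
    v ^ (((r : ℤ) + n + 1) * (r - k) - (-n - 1) * k) *
    qbinom (-n - 1) (r - k) * qbinom ((r : ℤ) + n + 1) k) * hsign

theorem quantum_binomial_sum_identity_general (r n : ℕ) :
    ∑ k ∈ Finset.range (r + 1),
        RatFunc.X ^ (-(k : ℤ) * r) * (-1 : RatFunc ℚ) ^ ((k : ℤ) - r) *
          qbinom ((n : ℤ) - k + r) n * qbinom ((r : ℤ) + n + 1) k
      = RatFunc.X ^ (-(r : ℤ) * ((n : ℤ) + r + 1)) := by
  rw [sum_congr rfl fun k hk =>
      summand_eq_qVandermonde_term n (Nat.lt_succ_iff.mp (mem_range.mp hk)), ← mul_sum,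
    show (r : ℤ) + n + 1 = ((r + n + 1 : ℕ) : ℤ) by push_cast; ring, ← qVandermondeSum,
    ← qbinom_natCast_add, show ((r + n + 1 : ℕ) : ℤ) + (-n - 1) = r by push_cast; ring,
    qbinom_natCast_self, mul_one]

/-- For all integers `r ≥ 0` and `n ≥ 1`:
`Σ_{k=0}^{r} v^{-kr} (-1)^{k-r} binom(n-k+r, n) binom(r+n+1, k) = v^{-r(n+r+1)}`. -/
theorem quantum_binomial_sum_identity (r n : ℕ) (hn : 1 ≤ n) :
    ∑ k ∈ Finset.range (r + 1),
        RatFunc.X ^ (-(k : ℤ) * r) * (-1 : RatFunc ℚ) ^ ((k : ℤ) - r) *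
          qbinom ((n : ℤ) - k + r) n * qbinom ((r : ℤ) + n + 1) k
      = RatFunc.X ^ (-(r : ℤ) * ((n : ℤ) + r + 1)) :=
  quantum_binomial_sum_identity_general r n
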